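/- Let H be a complex Hilbert space, let J be a countable index type, and let (θ_j)_{j∈J} be a family of vectors in H together with a constant C ≥ 1 such that for every f ∈ H the family (|⟨f, θ_j⟩|²)_{j∈J} is summable and the frame inequalities ∑_{j∈J} |⟨f, θ_j⟩|² ≤ ‖f‖² ≤ C²·∑_{j∈J} |⟨f, θ_j⟩|² hold. Then there exists a dual family (Θ_j)_{j∈J} of vectors in H such that for every f ∈ H the series ∑_{j∈J} ⟨f, θ_j⟩·Θ_j converges (has sum) to f in H. -/

import Mathlib

/-!
The analysis operator `T f = (⟪θ j, f⟫)_j` is bounded into `ℓ²(J)` by the upper frame bound, and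
its adjoint sends the `j`-th unit vector to `θ j`, so the frame operator `S = T† T` is
`S f = ∑ j, ⟪θ j, f⟫ • θ j`. The lower frame bound gives `re ⟪S f, f⟫ = ‖T f‖² ≥ A ‖f‖²`, so `S`
is invertible, and applying `S⁻¹` to that series shows that `Θ j = S⁻¹ (θ j)` is a dual family.
-/

open scoped InnerProductSpace InnerProduct lp

namespace InnerProductSpace

variable {𝕜 E J : Type*} [RCLike 𝕜] [NormedAddCommGroup E] [InnerProductSpace 𝕜 E]

section AnalysisOperator

variable (θ : J → E) (hsum : ∀ f : E, Summable fun j => ‖⟪θ j, f⟫_𝕜‖ ^ 2)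

noncomputable def analysisLinearMap : E →ₗ[𝕜] ℓ²(J, 𝕜) where
  toFun f := ⟨fun j => ⟪θ j, f⟫_𝕜, memℓp_gen (by simpa using hsum f)⟩
  map_add' f g := by ext j; exact inner_add_right _ _ _
  map_smul' a f := by ext j; exact inner_smul_right _ _ _

@[simp]
lemma analysisLinearMap_apply_apply (f : E) (j : J) :
    analysisLinearMap θ hsum f j = ⟪θ j, f⟫_𝕜 := rfl

lemma norm_analysisLinearMap_sq (f : E) :
    ‖analysisLinearMap θ hsum f‖ ^ 2 = ∑' j, ‖⟪θ j, f⟫_𝕜‖ ^ 2 := by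
  simpa using lp.norm_rpow_eq_tsum (p := 2) (by norm_num) (analysisLinearMap θ hsum f)

variable {B : ℝ} (hB : ∀ f : E, ∑' j, ‖⟪θ j, f⟫_𝕜‖ ^ 2 ≤ B * ‖f‖ ^ 2)

noncomputable def analysisOperator : E →L[𝕜] ℓ²(J, 𝕜) :=
  (analysisLinearMap θ hsum).mkContinuous √B fun f => by
    rw [← Real.sqrt_sq (norm_nonneg f), ← Real.sqrt_mul' _ (sq_nonneg _)]
    refine (le_abs_self _).trans (Real.abs_le_sqrt ?_)
    exact (norm_analysisLinearMap_sq θ hsum f).trans_le (hB f)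

@[simp]
lemma analysisOperator_apply_apply (f : E) (j : J) :
    analysisOperator θ hsum hB f j = ⟪θ j, f⟫_𝕜 := rfl

variable [CompleteSpace E]

lemma adjoint_analysisOperator_single [DecidableEq J] (j : J) (a : 𝕜) :
    ((analysisOperator θ hsum hB)†) (lp.single 2 j a) = a • θ j := by
  refine ext_inner_right 𝕜 fun f => ?_
  rw [ContinuousLinearMap.adjoint_inner_left, lp.inner_single_left, inner_smul_left]
  simp [mul_comm]

noncomputable def frameOperator : E →L[𝕜] E :=
  (analysisOperator θ hsum hB)† ∘L analysisOperator θ hsum hB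

lemma hasSum_inner_smul_frameOperator (f : E) :
    HasSum (fun j => ⟪θ j, f⟫_𝕜 • θ j) (frameOperator θ hsum hB f) := by
  classical
  simpa only [frameOperator, ContinuousLinearMap.comp_apply, map_smul,
    adjoint_analysisOperator_single, analysisOperator_apply_apply] using
    (lp.hasSum_single (by norm_num) (analysisOperator θ hsum hB f)).mapL
      ((analysisOperator θ hsum hB)†)

lemma isUnit_frameOperator {A : ℝ} (hA : 0 < A)
    (hlow : ∀ f : E, A * ‖f‖ ^ 2 ≤ ∑' j, ‖⟪θ j, f⟫_𝕜‖ ^ 2) :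
    IsUnit (frameOperator θ hsum hB) := by
  refine ContinuousLinearMap.isUnit_of_forall_le_norm_inner_map _ (c := ⟨A, hA.le⟩) hA fun f => ?_
  calc ‖f‖ ^ 2 * A ≤ ‖analysisOperator θ hsum hB f‖ ^ 2 := by
        rw [mul_comm]; exact (hlow f).trans_eq (norm_analysisLinearMap_sq θ hsum f).symm
    _ = RCLike.re ⟪frameOperator θ hsum hB f, f⟫_𝕜 :=
        ContinuousLinearMap.apply_norm_sq_eq_inner_adjoint_left _ f
    _ ≤ _ := RCLike.re_le_norm _

end AnalysisOperator

theorem exists_forall_hasSum_inner_smul [CompleteSpace E] (θ : J → E)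
    (hsum : ∀ f : E, Summable fun j => ‖⟪θ j, f⟫_𝕜‖ ^ 2) {A B : ℝ} (hA : 0 < A)
    (hlow : ∀ f : E, A * ‖f‖ ^ 2 ≤ ∑' j, ‖⟪θ j, f⟫_𝕜‖ ^ 2)
    (hB : ∀ f : E, ∑' j, ‖⟪θ j, f⟫_𝕜‖ ^ 2 ≤ B * ‖f‖ ^ 2) :
    ∃ Θ : J → E, ∀ f : E, HasSum (fun j => ⟪θ j, f⟫_𝕜 • Θ j) f := by
  obtain ⟨S, hS⟩ := isUnit_frameOperator θ hsum hB hA hlow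
  refine ⟨fun j => (↑S⁻¹ : E →L[𝕜] E) (θ j), fun f => ?_⟩
  have hSf : (↑S⁻¹ : E →L[𝕜] E) (frameOperator θ hsum hB f) = f := by
    rw [← hS]
    exact DFunLike.congr_fun S.inv_mul f
  simpa only [map_smul, hSf] using
    (hasSum_inner_smul_frameOperator θ hsum hB f).mapL (↑S⁻¹ : E →L[𝕜] E)

end InnerProductSpace

theorem frame_reconstruction {H : Type*} [NormedAddCommGroup H] [InnerProductSpace ℂ H]
    [CompleteSpace H] {J : Type*}
    (θ : J → H) (C : ℝ) (hC : 1 ≤ C)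
    (hsum : ∀ f : H, Summable fun j => ‖⟪θ j, f⟫_ℂ‖ ^ 2)
    (hlower : ∀ f : H, (∑' j, ‖⟪θ j, f⟫_ℂ‖ ^ 2) ≤ ‖f‖ ^ 2)
    (hupper : ∀ f : H, ‖f‖ ^ 2 ≤ C ^ 2 * ∑' j, ‖⟪θ j, f⟫_ℂ‖ ^ 2) :
    ∃ Θ : J → H, ∀ f : H, HasSum (fun j => ⟪θ j, f⟫_ℂ • Θ j) f := by
  have hC2 : 0 < C ^ 2 := pow_pos (zero_lt_one.trans_le hC) 2
  exact InnerProductSpace.exists_forall_hasSum_inner_smul θ hsum (inv_pos.2 hC2)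
    (fun f => (inv_mul_le_iff₀ hC2).2 (hupper f)) (B := 1) (by simpa using hlower)
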